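/- Let 0 < s < 1, b > 0, q > 1, and define g(c) = Γ((1−s)/2) − q·(√π/Γ(1+s/2))·c^{s/2}·₂F₁(s/2, (1+s)/2; 1+s/2; c) for c ∈ [0,1). Then g is strictly decreasing on (0,1), g(0) = Γ((1−s)/2) > 0, and lim_{c→1⁻} g(c) = (1−q)·Γ((1−s)/2) < 0. Consequently g has a unique zero c* ∈ (0,1). -/

import Mathlib

open Real Set Filter

/-- The Gauss hypergeometric function `₂F₁(α, β; γ; x)` as a power series sum. -/
noncomputable def twoF1 (α β γ x : ℝ) : ℝ :=
  ∑' k : ℕ, ((ascPochhammer ℝ k).eval α * (ascPochhammer ℝ k).eval β /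
      ((ascPochhammer ℝ k).eval γ * (Nat.factorial k))) * x ^ k

/-- The auxiliary function determining the endpoint of the equilibrium support. -/
noncomputable def gfun (s q c : ℝ) : ℝ :=
  Real.Gamma ((1 - s) / 2) -
    q * (Real.sqrt Real.pi / Real.Gamma (1 + s / 2)) * c ^ (s / 2) *
      twoF1 (s / 2) ((1 + s) / 2) (1 + s / 2) c

/-!
With `a = s/2` and `β = (1+s)/2` we have `g(c) = Γ(1-β) - K c^a ₂F₁(a, β; a+1; c)`, where
`K = q √π / Γ(a+1) > 0`. The coefficients of `₂F₁(a, β; a+1; ·)` are `a/(a+k) · (β)_k/k! ≥ 0`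
and the constant term is `1`, so `c ↦ c^a ₂F₁(a, β; a+1; c)` is strictly increasing on `[0,1]`.
Integrating the binomial series `t^(a-1) (1-t)^(-β) = ∑ (β)_k/k! t^(a+k-1)` termwise over `(0,1)`
against the Beta integral gives Gauss's value `₂F₁(a, β; a+1; 1) = Γ(a+1) Γ(1-β) / Γ(a+1-β)`.
In particular the coefficient series is summable, so `g` is continuous on `[0,1]`, and since
`a + 1 - β = 1/2` and `Γ(1/2) = √π`, `g(1) = (1-q) Γ(1-β)`. The intermediate value theorem and
strict monotonicity give the unique zero.
-/

open MeasureTheory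
open scoped Nat

theorem Ring.choose_add_natCast_sub_one {K : Type*} [Field K] [CharZero K] (r : K) (k : ℕ) :
    Ring.choose (r + k - 1) k = (ascPochhammer K k).eval r / k ! := by
  rw [Ring.choose_eq_smul, Polynomial.descPochhammer_smeval_eq_ascPochhammer,
    Polynomial.ascPochhammer_smeval_eq_eval, smul_eq_mul, div_eq_inv_mul]
  ring_nf

theorem hasSum_ascPochhammer_div_factorial_mul_pow (r : ℝ) {t : ℝ} (ht : |t| < 1) :
    HasSum (fun k => (ascPochhammer ℝ k).eval r / k ! * t ^ k) ((1 - t) ^ (-r)) := by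
  have h := (one_div_one_sub_rpow_hasFPowerSeriesOnBall_zero r).hasSum (y := t)
    (by simpa [enorm_eq_nnnorm, ← NNReal.coe_lt_coe] using ht)
  simpa [FormalMultilinearSeries.ofScalars_apply_eq, Ring.choose_add_natCast_sub_one, mul_comm,
    Real.rpow_neg (show 0 ≤ 1 - t by linarith [abs_lt.mp ht])] using h

theorem ascPochhammer_eval_mul_add {R : Type*} [CommSemiring R] (a : R) (k : ℕ) :
    (ascPochhammer R k).eval a * (a + k) = a * (ascPochhammer R k).eval (a + 1) := by
  rw [← ascPochhammer_succ_eval, ascPochhammer_succ_left]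
  simp

theorem ofReal_cpow_mul_one_sub_cpow (u v : ℝ) {t : ℝ} (ht : t ∈ Icc (0 : ℝ) 1) :
    (t : ℂ) ^ ((u : ℂ) - 1) * (1 - (t : ℂ)) ^ ((v : ℂ) - 1)
      = ((t ^ (u - 1) * (1 - t) ^ (v - 1) : ℝ) : ℂ) := by
  rw [Complex.ofReal_mul, Complex.ofReal_cpow ht.1, Complex.ofReal_cpow (by linarith [ht.2])]
  push_cast
  ring

theorem integrableOn_rpow_mul_one_sub_rpow {u v : ℝ} (hu : 0 < u) (hv : 0 < v) :
    IntegrableOn (fun t : ℝ => t ^ (u - 1) * (1 - t) ^ (v - 1)) (Ioo 0 1) := by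
  have h : IntegrableOn _ (Ioo (0 : ℝ) 1) :=
    ((Complex.betaIntegral_convergent (u := u) (v := v) (by simpa) (by simpa)).1.mono_set
      Ioo_subset_Ioc_self).re
  refine h.congr_fun (fun t ht => ?_) measurableSet_Ioo
  simp [ofReal_cpow_mul_one_sub_cpow u v (Ioo_subset_Icc_self ht)]

theorem integral_rpow_mul_one_sub_rpow {u v : ℝ} (hu : 0 < u) (hv : 0 < v) :
    ∫ t in Ioo 0 1, t ^ (u - 1) * (1 - t) ^ (v - 1) = Gamma u * Gamma v / Gamma (u + v) := by
  have h := Complex.betaIntegral_eq_Gamma_mul_div u v (by simpa) (by simpa)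
  rw [Complex.betaIntegral, intervalIntegral.integral_of_le zero_le_one,
    integral_Ioc_eq_integral_Ioo, setIntegral_congr_fun measurableSet_Ioo
      (fun t ht => ofReal_cpow_mul_one_sub_cpow u v (Ioo_subset_Icc_self ht)),
    integral_complex_ofReal, ← Complex.ofReal_add, Complex.Gamma_ofReal, Complex.Gamma_ofReal,
    Complex.Gamma_ofReal] at h
  exact_mod_cast h

theorem integral_Ioo_rpow {r : ℝ} (hr : -1 < r) : ∫ t in Ioo 0 1, t ^ r = 1 / (r + 1) := by
  rw [← integral_Ioc_eq_integral_Ioo, ← intervalIntegral.integral_of_le zero_le_one,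
    integral_rpow (Or.inl hr), one_rpow, zero_rpow (by linarith)]
  ring

theorem hasSum_ascPochhammer_div_factorial_mul_rpow (a β : ℝ) {t : ℝ}
    (ht : t ∈ Ioo (0 : ℝ) 1) :
    HasSum (fun k : ℕ => (ascPochhammer ℝ k).eval β / k ! * t ^ (a - 1 + k))
      (t ^ (a - 1) * (1 - t) ^ (-β)) := by
  have h := (hasSum_ascPochhammer_div_factorial_mul_pow β
    (abs_lt.mpr ⟨by linarith [ht.1], ht.2⟩)).mul_left (t ^ (a - 1))
  refine h.congr_fun fun k => ?_
  rw [rpow_add ht.1, rpow_natCast]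
  ring

/-- Termwise integration of the binomial expansion of the Beta integrand; the terms are
nonnegative, so each one is its own dominating function. -/
theorem hasSum_ascPochhammer_div_factorial_div_add {a β : ℝ} (ha : 0 < a) (hβ0 : 0 < β)
    (hβ1 : β < 1) :
    HasSum (fun k : ℕ => (ascPochhammer ℝ k).eval β / k ! / (a + k))
      (Gamma a * Gamma (1 - β) / Gamma (a + (1 - β))) := by
  set c : ℕ → ℝ := fun k => (ascPochhammer ℝ k).eval β / (k ! : ℝ)
  set F : ℕ → ℝ → ℝ := fun k t => c k * t ^ (a - 1 + k)
  have hexp (k : ℕ) : -1 < a - 1 + k := by linarith [k.cast_nonneg (α := ℝ)]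
  have hF_nonneg (k : ℕ) : ∀ t ∈ Ioo (0 : ℝ) 1, 0 ≤ F k t := fun t ht => by
    have := ascPochhammer_pos k β hβ0
    have := rpow_nonneg ht.1.le (a - 1 + k)
    positivity
  have hF_integrable (k : ℕ) : IntegrableOn (F k) (Ioo 0 1) :=
    ((intervalIntegral.intervalIntegrable_rpow' (hexp k)).1.mono_set
      Ioo_subset_Ioc_self).const_mul (c k)
  have hF_integral (k : ℕ) : ∫ t in Ioo 0 1, F k t = c k / (a + k) := by
    rw [integral_const_mul, integral_Ioo_rpow (hexp k)]
    ring_nf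
  have hF_sum (t : ℝ) (ht : t ∈ Ioo (0 : ℝ) 1) :
      HasSum (F · t) (t ^ (a - 1) * (1 - t) ^ (-β)) :=
    hasSum_ascPochhammer_div_factorial_mul_rpow a β ht
  have hβ' : 0 < 1 - β := by linarith
  have hbeta_int := integrableOn_rpow_mul_one_sub_rpow ha hβ'
  have hbeta := integral_rpow_mul_one_sub_rpow ha hβ'
  rw [sub_sub_cancel_left] at hbeta_int hbeta
  have h := hasSum_integral_of_dominated_convergence (μ := volume.restrict (Ioo 0 1)) F
    (fun k => (hF_integrable k).aestronglyMeasurable)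
    (fun k => ae_restrict_of_forall_mem measurableSet_Ioo fun t ht =>
      (Real.norm_of_nonneg (hF_nonneg k t ht)).le)
    (ae_restrict_of_forall_mem measurableSet_Ioo fun t ht => (hF_sum t ht).summable)
    (hbeta_int.congr_fun (fun t ht => (hF_sum t ht).tsum_eq.symm) measurableSet_Ioo)
    (ae_restrict_of_forall_mem measurableSet_Ioo hF_sum)
  simpa only [hF_integral, hbeta] using h

theorem ordinaryHypergeometricCoefficient_self_add_one {a : ℝ} (ha : 0 < a) (β : ℝ) (k : ℕ) :
    ordinaryHypergeometricCoefficient a β (a + 1) k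
      = a * ((ascPochhammer ℝ k).eval β / k ! / (a + k)) := by
  have := ascPochhammer_pos k (a + 1) (by linarith)
  have := ascPochhammer_eval_mul_add a k
  field_simp
  linear_combination (ascPochhammer ℝ k).eval β * this

theorem ordinaryHypergeometricCoefficient_nonneg {a b c : ℝ} (ha : 0 < a) (hb : 0 < b)
    (hc : 0 < c) (k : ℕ) : 0 ≤ ordinaryHypergeometricCoefficient a b c k := by
  have := ascPochhammer_pos k a ha
  have := ascPochhammer_pos k b hb
  have := ascPochhammer_pos k c hc
  positivity

/-- Gauss's summation theorem `₂F₁(a, β; γ; 1) = Γ(γ) Γ(γ-a-β) / (Γ(γ-a) Γ(γ-β))`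
for `γ = a + 1`. -/
theorem hasSum_ordinaryHypergeometricCoefficient_self_add_one {a β : ℝ} (ha : 0 < a)
    (hβ0 : 0 < β) (hβ1 : β < 1) :
    HasSum (ordinaryHypergeometricCoefficient a β (a + 1))
      (Gamma (a + 1) * Gamma (1 - β) / Gamma (a + 1 - β)) := by
  have h := (hasSum_ascPochhammer_div_factorial_div_add ha hβ0 hβ1).mul_left a
  rwa [funext (ordinaryHypergeometricCoefficient_self_add_one ha β), Gamma_add_one ha.ne',
    add_sub_assoc, mul_assoc, mul_div_assoc]

section PowerSeries

variable {A : ℕ → ℝ}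

theorem tsum_mul_zero_pow (A : ℕ → ℝ) : ∑' k, A k * 0 ^ k = A 0 := by
  rw [tsum_eq_single 0 fun k hk => by simp [hk]]
  simp

theorem summable_mul_pow_of_nonneg (hA : ∀ k, 0 ≤ A k) (hAs : Summable A) {x : ℝ}
    (hx : x ∈ Icc 0 1) : Summable fun k => A k * x ^ k :=
  hAs.of_nonneg_of_le (fun k => mul_nonneg (hA k) (pow_nonneg hx.1 k))
    (fun k => mul_le_of_le_one_right (hA k) (pow_le_one₀ hx.1 hx.2))

theorem continuousOn_tsum_mul_pow (hA : Summable fun k => ‖A k‖) :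
    ContinuousOn (fun x => ∑' k, A k * x ^ k) (Icc (-1) 1) := by
  refine continuousOn_tsum (fun k => by fun_prop) hA fun k x hx => ?_
  rw [norm_mul, norm_pow]
  exact mul_le_of_le_one_right (norm_nonneg _)
    (pow_le_one₀ (norm_nonneg _) (abs_le.mpr hx))

theorem monotoneOn_tsum_mul_pow (hA : ∀ k, 0 ≤ A k) (hAs : Summable A) :
    MonotoneOn (fun x => ∑' k, A k * x ^ k) (Icc 0 1) := fun _ hx _ hy hxy =>
  Summable.tsum_le_tsum (fun k => mul_le_mul_of_nonneg_left (pow_le_pow_left₀ hx.1 hxy k) (hA k))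
    (summable_mul_pow_of_nonneg hA hAs hx) (summable_mul_pow_of_nonneg hA hAs hy)

end PowerSeries

theorem twoF1_eq_tsum (α β γ x : ℝ) :
    twoF1 α β γ x = ∑' k, ordinaryHypergeometricCoefficient α β γ k * x ^ k := by
  refine tsum_congr fun k => ?_
  ring

section SelfAddOne

variable {a β : ℝ}

theorem twoF1_self_add_one_one (ha : 0 < a) (hβ0 : 0 < β) (hβ1 : β < 1) :
    twoF1 a β (a + 1) 1 = Gamma (a + 1) * Gamma (1 - β) / Gamma (a + 1 - β) := by
  simpa [twoF1_eq_tsum] using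
    (hasSum_ordinaryHypergeometricCoefficient_self_add_one ha hβ0 hβ1).tsum_eq

theorem continuousOn_rpow_mul_twoF1_self_add_one (ha : 0 < a) (hβ0 : 0 < β) (hβ1 : β < 1) :
    ContinuousOn (fun c => c ^ a * twoF1 a β (a + 1) c) (Icc 0 1) := by
  have hA := (hasSum_ordinaryHypergeometricCoefficient_self_add_one ha hβ0 hβ1).summable
  have hF := (continuousOn_tsum_mul_pow hA.norm).mono
    (Icc_subset_Icc_left (by norm_num : (-1 : ℝ) ≤ 0))
  simp only [← twoF1_eq_tsum] at hF
  exact (continuousOn_id.rpow_const fun _ _ => Or.inr ha.le).mul hF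

theorem strictMonoOn_rpow_mul_twoF1_self_add_one (ha : 0 < a) (hβ0 : 0 < β) (hβ1 : β < 1) :
    StrictMonoOn (fun c => c ^ a * twoF1 a β (a + 1) c) (Icc 0 1) := by
  have hA := ordinaryHypergeometricCoefficient_nonneg ha hβ0 (by linarith : 0 < a + 1)
  have hAs := (hasSum_ordinaryHypergeometricCoefficient_self_add_one ha hβ0 hβ1).summable
  have hmono : MonotoneOn (twoF1 a β (a + 1)) (Icc 0 1) := by
    simpa only [← twoF1_eq_tsum] using monotoneOn_tsum_mul_pow hA hAs
  have hone : ∀ c ∈ Icc (0 : ℝ) 1, 1 ≤ twoF1 a β (a + 1) c := fun c hc => by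
    have h0 : twoF1 a β (a + 1) 0 = 1 := by
      simp [twoF1_eq_tsum, tsum_mul_zero_pow, ordinaryHypergeometricCoefficient]
    exact h0.symm.trans_le (hmono ⟨le_rfl, zero_le_one⟩ hc hc.1)
  intro c hc d hd hcd
  exact mul_lt_mul (rpow_lt_rpow hc.1 hcd ha) (hmono hc hd hcd.le)
    (by linarith [hone c hc]) (rpow_nonneg hd.1 a)

end SelfAddOne

theorem existsUnique_zero_of_strictAntiOn {α : Type*} [ConditionallyCompleteLinearOrder α]
    [TopologicalSpace α] [OrderTopology α] [DenselyOrdered α] {f : α → ℝ} {a b : α}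
    (hab : a ≤ b) (hf : ContinuousOn f (Icc a b)) (hanti : StrictAntiOn f (Icc a b)) (ha : 0 < f a)
    (hb : f b < 0) : ∃! c, c ∈ Ioo a b ∧ f c = 0 := by
  obtain ⟨c, hc, hfc⟩ := intermediate_value_Icc' hab hf ⟨hb.le, ha.le⟩
  have hc' : c ∈ Ioo a b :=
    ⟨hc.1.lt_of_ne (by rintro rfl; linarith), hc.2.lt_of_ne (by rintro rfl; linarith)⟩
  exact ⟨c, ⟨hc', hfc⟩, fun d hd =>
    hanti.injOn (Ioo_subset_Icc_self hd.1) hc (hd.2.trans hfc.symm)⟩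

section Gfun

variable {s : ℝ}

theorem gfun_eq (s q : ℝ) :
    gfun s q = fun c => Gamma ((1 - s) / 2) -
      q * (√π / Gamma (s / 2 + 1)) * (c ^ (s / 2) * twoF1 (s / 2) ((1 + s) / 2) (s / 2 + 1) c) := by
  funext c
  simp only [gfun, add_comm 1 (s / 2)]
  ring

theorem gfun_zero (hs0 : 0 < s) (q : ℝ) : gfun s q 0 = Gamma ((1 - s) / 2) := by
  simp [gfun_eq, zero_rpow (by linarith : s / 2 ≠ 0)]

theorem gfun_one (hs0 : 0 < s) (hs1 : s < 1) (q : ℝ) :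
    gfun s q 1 = (1 - q) * Gamma ((1 - s) / 2) := by
  simp only [gfun_eq]
  rw [one_rpow, one_mul, twoF1_self_add_one_one (by linarith) (by linarith) (by linarith),
    show s / 2 + 1 - (1 + s) / 2 = 1 / 2 by ring, show 1 - (1 + s) / 2 = (1 - s) / 2 by ring,
    Gamma_one_half_eq]
  have := Gamma_pos_of_pos (by linarith : 0 < s / 2 + 1)
  field_simp

theorem continuousOn_gfun (hs0 : 0 < s) (hs1 : s < 1) (q : ℝ) :
    ContinuousOn (gfun s q) (Icc 0 1) :=
  gfun_eq s q ▸ continuousOn_const.sub (continuousOn_const.mul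
    (continuousOn_rpow_mul_twoF1_self_add_one (by linarith) (by linarith) (by linarith)))

theorem strictAntiOn_gfun (hs0 : 0 < s) (hs1 : s < 1) {q : ℝ} (hq : 0 < q) :
    StrictAntiOn (gfun s q) (Icc 0 1) := fun c hc d hd hcd => by
  have := Gamma_pos_of_pos (by linarith : 0 < s / 2 + 1)
  simp only [gfun_eq]
  exact sub_lt_sub_left (mul_lt_mul_of_pos_left (strictMonoOn_rpow_mul_twoF1_self_add_one
    (by linarith) (by linarith) (by linarith) hc hd hcd) (by positivity)) _

end Gfun

theorem gfun_unique_zero_general (s q : ℝ) (hs0 : 0 < s) (hs1 : s < 1) (hq : 1 < q) :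
    StrictAntiOn (gfun s q) (Ioo 0 1) ∧
    gfun s q 0 = Real.Gamma ((1 - s) / 2) ∧
    0 < Real.Gamma ((1 - s) / 2) ∧
    Tendsto (gfun s q) (nhdsWithin 1 (Iio 1)) (nhds ((1 - q) * Real.Gamma ((1 - s) / 2))) ∧
    (1 - q) * Real.Gamma ((1 - s) / 2) < 0 ∧
    ∃! c, c ∈ Ioo (0 : ℝ) 1 ∧ gfun s q c = 0 := by
  have hΓ : 0 < Gamma ((1 - s) / 2) := Gamma_pos_of_pos (by linarith)
  have hneg : (1 - q) * Gamma ((1 - s) / 2) < 0 := mul_neg_of_neg_of_pos (by linarith) hΓ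
  have hcont := continuousOn_gfun hs0 hs1 q
  have hanti := strictAntiOn_gfun hs0 hs1 (by linarith : 0 < q)
  have hg0 := gfun_zero hs0 q
  have hg1 := gfun_one hs0 hs1 q
  refine ⟨hanti.mono Ioo_subset_Icc_self, hg0, hΓ, ?_, hneg,
    existsUnique_zero_of_strictAntiOn zero_le_one hcont hanti (hg0 ▸ hΓ) (hg1 ▸ hneg)⟩
  exact hg1 ▸ (hcont 1 ⟨zero_le_one, le_rfl⟩).tendsto.mono_left
    (nhdsWithin_le_of_mem (Icc_mem_nhdsLT zero_lt_one))

/-- `g` is strictly decreasing on `(0,1)`, positive at `0`, tends to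
`(1−q)Γ((1−s)/2) < 0` at `1⁻`, and has a unique zero in `(0,1)`. -/
theorem gfun_unique_zero (s b q : ℝ) (hs0 : 0 < s) (hs1 : s < 1) (hb : 0 < b) (hq : 1 < q) :
    StrictAntiOn (gfun s q) (Ioo 0 1) ∧
    gfun s q 0 = Real.Gamma ((1 - s) / 2) ∧
    0 < Real.Gamma ((1 - s) / 2) ∧
    Tendsto (gfun s q) (nhdsWithin 1 (Iio 1)) (nhds ((1 - q) * Real.Gamma ((1 - s) / 2))) ∧
    (1 - q) * Real.Gamma ((1 - s) / 2) < 0 ∧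
    ∃! c, c ∈ Ioo (0 : ℝ) 1 ∧ gfun s q c = 0 :=
  gfun_unique_zero_general s q hs0 hs1 hq
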